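/- arXiv:2006.15101 — 2 statements merged into one kernel-verified Lean document; each statement's English description precedes it below -/
import Mathlib

section
/- Fix an integer m ≥ 2 and a real number K with 1 ≤ K < m, and define f : ℂ → ℂ by f(0) = 0 and f(z) = z^m |z|^{−m(K−1)/K} for z ≠ 0. Then for every z ∈ ℂ with z ≠ 0, f is real-differentiable at z and the determinant of its real derivative satisfies det Df(z) = (m²/K) · |z|^{2(m−K)/K}. -/
/-!
Near `z ≠ 0` the map is `w ↦ w ^ m * ‖w‖ ^ p` with `p = -m(K-1)/K`. Its real derivative is
`v ↦ a v + b v̄` with Wirtinger coefficients `a = (m + p/2) f(z)/z` and `b = (p/2) f(z)/z̄`, and such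
a map has determinant `|a|² - |b|² = m (m + p) |z|^{2(m+p-1)}`; with `m + p = m/K` this is the claim.
-/

open Complex ComplexConjugate

theorem det_smul_one_add_smul_conjCLE (a b : ℂ) :
    (a • (1 : ℂ →L[ℝ] ℂ) + b • (conjCLE : ℂ →L[ℝ] ℂ)).det = ‖a‖ ^ 2 - ‖b‖ ^ 2 := by
  rw [ContinuousLinearMap.det, ← LinearMap.det_toMatrix basisOneI, Matrix.det_fin_two]
  simp [LinearMap.toMatrix_apply, Complex.sq_norm, normSq_apply]
  ring

theorem hasFDerivAt_ofReal_norm_rpow {z : ℂ} (hz : z ≠ 0) (p : ℝ) :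
    HasFDerivAt (fun w : ℂ => ((‖w‖ ^ p : ℝ) : ℂ))
      ((p / 2 * ‖z‖ ^ p) • (z⁻¹ • (1 : ℂ →L[ℝ] ℂ) + (conj z)⁻¹ • (conjCLE : ℂ →L[ℝ] ℂ))) z := by
  have hz' : 0 < ‖z‖ := norm_pos_iff.mpr hz
  have hsq : (fun w : ℂ => ‖w‖ ^ p) = fun w => (‖w‖ ^ 2) ^ (p / 2) := by
    ext w
    rw [← Real.rpow_natCast, ← Real.rpow_mul (norm_nonneg w)]
    ring_nf
  have hpow : (‖z‖ ^ 2) ^ (p / 2 - 1) = ‖z‖ ^ p / normSq z := by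
    rw [← Real.rpow_natCast, ← Real.rpow_mul hz'.le,
      show ((2 : ℕ) : ℝ) * (p / 2 - 1) = p - 2 by push_cast; ring,
      Real.rpow_sub hz', normSq_eq_norm_sq, Real.rpow_two]
  have h : HasFDerivAt (fun w : ℂ => ‖w‖ ^ p)
      ((p / 2 * (‖z‖ ^ 2) ^ (p / 2 - 1)) • 2 • innerSL ℝ z) z := by
    rw [hsq]
    simpa using (hasFDerivAt_id z).norm_sq.rpow_const (p := p / 2) (Or.inl (by positivity))
  refine (ofRealCLM.hasFDerivAt.comp z h).congr_fderiv ?_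
  ext v
  have hwirtinger : z⁻¹ * v + (conj z)⁻¹ * conj v = ((2 * (v * conj z).re / normSq z : ℝ) : ℂ) := by
    rw [ofReal_div, ← add_conj, inv_def, inv_def, conj_conj, normSq_conj, map_mul, conj_conj]
    push_cast
    ring
  simp only [ContinuousLinearMap.comp_apply, add_apply, FunLike.coe_smul, Pi.smul_apply,
    innerSL_apply_apply, Complex.inner, one_apply_eq_self, ofRealCLM_apply, smul_eq_mul, hpow,
    ContinuousLinearEquiv.coe_coe, conjCLE_apply, hwirtinger, real_smul]
  rw [nsmul_eq_mul]
  push_cast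
  ring

noncomputable def powMulNormRpow (m : ℕ) (p : ℝ) (w : ℂ) : ℂ := w ^ m * ((‖w‖ ^ p : ℝ) : ℂ)

theorem hasFDerivAt_powMulNormRpow (m : ℕ) (p : ℝ) {z : ℂ} (hz : z ≠ 0) :
    HasFDerivAt (powMulNormRpow m p)
      ((((m + p / 2 : ℝ) : ℂ) * powMulNormRpow m p z / z) • (1 : ℂ →L[ℝ] ℂ) +
        (((p / 2 : ℝ) : ℂ) * powMulNormRpow m p z / conj z) • (conjCLE : ℂ →L[ℝ] ℂ)) z := by
  have hpow_deriv : (m : ℂ) * z ^ (m - 1) = m * z ^ m / z := by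
    rcases m with _ | m
    · simp
    · rw [pow_succ]; field_simp; simp
  refine ((hasDerivAt_pow m z).complexToReal_fderiv.mul
    (hasFDerivAt_ofReal_norm_rpow hz p)).congr_fderiv ?_
  ext v
  simp [powMulNormRpow, hpow_deriv]
  field_simp
  ring

theorem det_fderiv_powMulNormRpow (m : ℕ) (p : ℝ) {z : ℂ} (hz : z ≠ 0) :
    (fderiv ℝ (powMulNormRpow m p) z).det = m * (m + p) * ‖z‖ ^ (2 * (m + p - 1)) := by
  have hz' : 0 < ‖z‖ := norm_pos_iff.mpr hz
  have hnorm : ‖z‖ ^ (2 * (m + p - 1)) = (‖z‖ ^ m * ‖z‖ ^ p) ^ 2 / ‖z‖ ^ 2 := by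
    rw [← Real.rpow_natCast ‖z‖ m, ← Real.rpow_add hz', ← Real.rpow_natCast _ 2,
      ← Real.rpow_mul hz'.le, ← Real.rpow_natCast ‖z‖ 2, ← Real.rpow_sub hz']
    push_cast
    ring_nf
  rw [(hasFDerivAt_powMulNormRpow m p hz).fderiv, det_smul_one_add_smul_conjCLE, hnorm]
  simp only [powMulNormRpow, norm_mul, norm_div, norm_real, norm_pow, norm_conj, Real.norm_eq_abs,
    abs_of_pos (Real.rpow_pos_of_pos hz' p)]
  field_simp
  simp only [sq_abs]
  ring

theorem jacobian_of_sharpness_example_general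
    (m : ℕ) (K : ℝ) (hK1 : 1 ≤ K)
    (f : ℂ → ℂ)
    (hf : ∀ z : ℂ, z ≠ 0 →
      f z = z ^ m * ((‖z‖ ^ (-((m : ℝ) * (K - 1) / K)) : ℝ) : ℂ)) :
    ∀ z : ℂ, z ≠ 0 → DifferentiableAt ℝ f z ∧
      (fderiv ℝ f z).det = ((m : ℝ) ^ 2 / K) * ‖z‖ ^ (2 * ((m : ℝ) - K) / K) := by
  intro z hz
  have hfg : f =ᶠ[nhds z] powMulNormRpow m (-((m : ℝ) * (K - 1) / K)) :=
    (eventually_ne_nhds hz).mono hf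
  refine ⟨((hasFDerivAt_powMulNormRpow _ _ hz).congr_of_eventuallyEq hfg).differentiableAt, ?_⟩
  have hK : K ≠ 0 := (zero_lt_one.trans_le hK1).ne'
  have hexp : (m : ℝ) + -((m : ℝ) * (K - 1) / K) = m / K := by
    field_simp
    ring
  rw [hfg.fderiv_eq, det_fderiv_powMulNormRpow _ _ hz, hexp,
    show 2 * ((m : ℝ) / K - 1) = 2 * (m - K) / K by field_simp]
  ring

/-- Example 4.1 of the paper: the Jacobian determinant of
`f(z) = z^m |z|^{−m(K−1)/K}` equals `(m²/K)|z|^{2(m−K)/K}` at every `z ≠ 0`. -/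
theorem jacobian_of_sharpness_example
    (m : ℕ) (hm : 2 ≤ m) (K : ℝ) (hK1 : 1 ≤ K) (hKm : K < m)
    (f : ℂ → ℂ) (hf0 : f 0 = 0)
    (hf : ∀ z : ℂ, z ≠ 0 →
      f z = z ^ m * ((‖z‖ ^ (-((m : ℝ) * (K - 1) / K)) : ℝ) : ℂ)) :
    ∀ z : ℂ, z ≠ 0 → DifferentiableAt ℝ f z ∧
      (fderiv ℝ f z).det = ((m : ℝ) ^ 2 / K) * ‖z‖ ^ (2 * ((m : ℝ) - K) / K) :=
  jacobian_of_sharpness_example_general m K hK1 f hf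
end

section
/- Fix an integer m ≥ 2 and a real number K with 1 ≤ K < m, and define f : ℂ → ℂ by f(0) = 0 and f(z) = z^m |z|^{−m(K−1)/K} for z ≠ 0. Then for every z ∈ ℂ with z ≠ 0, the operator norm of the real derivative satisfies ‖Df(z)‖ = m · |z|^{m/K − 1}, and consequently the distortion identity ‖Df(z)‖² = K · det Df(z) holds; in particular f is K-quasiregular on the unit disk. -/
/-!
Write `p = -m(K-1)/K`, so that `f z = z^m ‖z‖^p` off the origin. At `z ≠ 0` the real derivative
is `v ↦ A v + B v̄` with `A = (m + p/2) f(z)/z` and `B = (p/2) f(z)/z̄`. Such a map has operator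
norm `‖A‖ + ‖B‖` and determinant `‖A‖² - ‖B‖²`. Here `‖A‖ + ‖B‖ = m ‖z‖^(m/K-1)` and
`‖A‖ - ‖B‖ = (m + p) ‖z‖^(m/K-1) = (m/K) ‖z‖^(m/K-1)`, whence `‖Df‖² = K det Df`.
-/

section

open Complex ComplexConjugate

theorem det_smul_id_add_smul_conjCLE (A B : ℂ) :
    (A • ContinuousLinearMap.id ℝ ℂ + B • (conjCLE : ℂ →L[ℝ] ℂ)).det = ‖A‖ ^ 2 - ‖B‖ ^ 2 := by
  rw [ContinuousLinearMap.det, ← LinearMap.det_toMatrix basisOneI, Matrix.det_fin_two,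
    ← normSq_eq_norm_sq, ← normSq_eq_norm_sq]
  simp [LinearMap.toMatrix_apply, normSq_apply]
  ring

theorem norm_smul_id_add_smul_conjCLE (A B : ℂ) :
    ‖A • ContinuousLinearMap.id ℝ ℂ + B • (conjCLE : ℂ →L[ℝ] ℂ)‖ = ‖A‖ + ‖B‖ := by
  set D := A • ContinuousLinearMap.id ℝ ℂ + B • (conjCLE : ℂ →L[ℝ] ℂ)
  have hD (v : ℂ) : D v = A * v + B * conj v := rfl
  refine le_antisymm (D.opNorm_le_bound (by positivity) fun v => ?_) ?_
  · calc ‖D v‖ ≤ ‖A * v‖ + ‖B * conj v‖ := hD v ▸ norm_add_le _ _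
      _ = (‖A‖ + ‖B‖) * ‖v‖ := by simp only [norm_mul, norm_conj]; ring
  · -- rotating by half the difference of the arguments aligns `A v` with `B v̄`
    set v := exp (((arg B - arg A) / 2 : ℝ) * I)
    have hAv : A * v = ‖A‖ * exp (((arg A + arg B) / 2 : ℝ) * I) := by
      conv_lhs => rw [← norm_mul_exp_arg_mul_I A]
      rw [mul_assoc, ← exp_add]
      push_cast
      ring_nf
    have hBv : B * conj v = ‖B‖ * exp (((arg A + arg B) / 2 : ℝ) * I) := by
      conv_lhs => rw [← norm_mul_exp_arg_mul_I B]
      rw [← exp_conj, mul_assoc, ← exp_add]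
      simp only [map_mul, conj_ofReal, conj_I]
      push_cast
      ring_nf
    calc ‖A‖ + ‖B‖ = ‖D v‖ := by
          rw [hD, hAv, hBv, ← add_mul, norm_mul, norm_exp_ofReal_mul_I, mul_one]
          norm_cast
          exact (abs_of_nonneg (by positivity)).symm
      _ ≤ ‖D‖ * ‖v‖ := D.le_opNorm v
      _ = ‖D‖ := by rw [norm_exp_ofReal_mul_I, mul_one]

theorem hasFDerivAt_norm_rpow_of_ne_zero {E : Type*} [NormedAddCommGroup E]
    [InnerProductSpace ℝ E] {x : E} (hx : x ≠ 0) (p : ℝ) :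
    HasFDerivAt (fun y : E ↦ ‖y‖ ^ p) ((p * ‖x‖ ^ (p - 2)) • innerSL ℝ x) x := by
  have h := (hasStrictFDerivAt_norm_sq x).hasFDerivAt.rpow_const (p := p / 2)
    (Or.inl (by positivity))
  convert h using 1
  · ext y
    rw [← Real.rpow_natCast_mul (norm_nonneg y)]
    push_cast
    ring_nf
  · ext y
    simp only [FunLike.coe_smul, Pi.smul_apply, smul_eq_mul, nsmul_eq_mul, Pi.mul_apply,
      Pi.natCast_apply]
    rw [← Real.rpow_natCast_mul (norm_nonneg x)]
    push_cast
    ring_nf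

theorem hasFDerivAt_pow_mul_norm_rpow {z : ℂ} (hz : z ≠ 0) (n : ℕ) (p : ℝ) :
    HasFDerivAt (fun w : ℂ ↦ w ^ n * ((‖w‖ ^ p : ℝ) : ℂ))
      (((n + p / 2 : ℝ) * (z ^ n * (‖z‖ ^ p : ℝ)) / z) • ContinuousLinearMap.id ℝ ℂ +
        ((p / 2 : ℝ) * (z ^ n * (‖z‖ ^ p : ℝ)) / conj z) • (conjCLE : ℂ →L[ℝ] ℂ)) z := by
  have hpow := (hasDerivAt_pow n z).hasFDerivAt.restrictScalars ℝ
  have hnorm := ofRealCLM.hasFDerivAt.comp z (hasFDerivAt_norm_rpow_of_ne_zero hz p)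
  refine (hpow.mul hnorm).congr_fderiv ?_
  have hre (v : ℂ) : (((v * conj z).re : ℝ) : ℂ) = (v * conj z + conj v * z) / 2 := by
    rw [re_eq_add_conj, map_mul, conj_conj]
  have hnorm_sq : ((‖z‖ ^ (p - 2) : ℝ) : ℂ) * (z * conj z) = ((‖z‖ ^ p : ℝ) : ℂ) := by
    rw [mul_conj, normSq_eq_norm_sq, ← ofReal_mul, ← Real.rpow_natCast,
      ← Real.rpow_add (norm_pos_iff.mpr hz)]
    norm_num
  have hpow_pred : (n : ℂ) * z ^ (n - 1) * z = n * z ^ n := by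
    rcases n with _ | n
    · simp
    · rw [mul_assoc, ← pow_succ, Nat.add_sub_cancel]
  have hz' : conj z ≠ 0 := (map_ne_zero _).mpr hz
  ext v
  simp only [add_apply, smul_apply, ContinuousLinearMap.comp_apply, ofRealCLM_apply,
    coe_innerSL_apply, Complex.inner, smul_eq_mul, ContinuousLinearMap.coe_restrictScalars',
    ContinuousLinearMap.toSpanSingleton_apply, ContinuousLinearMap.id_apply,
    ContinuousLinearEquiv.coe_coe, ContinuousAlgEquiv.coeCLE_apply, conjCAE_apply,
    Function.comp_apply]
  rw [ofReal_mul, ofReal_mul, hre]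
  push_cast
  linear_combination (norm := skip)
    ((p / 2) * z ^ n * v / z + (p / 2) * z ^ n * conj v / conj z) * hnorm_sq +
      ((‖z‖ ^ p : ℝ) : ℂ) * v / z * hpow_pred
  field_simp
  ring

theorem norm_pow_mul_norm_rpow {z : ℂ} (hz : z ≠ 0) (n : ℕ) (p : ℝ) :
    ‖z ^ n * ((‖z‖ ^ p : ℝ) : ℂ)‖ = ‖z‖ ^ (n + p) := by
  rw [norm_mul, norm_pow, norm_real, Real.norm_of_nonneg (by positivity),
    Real.rpow_add (norm_pos_iff.mpr hz), Real.rpow_natCast]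

end

theorem distortion_of_sharpness_example_general
    (m : ℕ) (K : ℝ) (hK1 : 1 ≤ K)
    (f : ℂ → ℂ)
    (hf : ∀ z : ℂ, z ≠ 0 →
      f z = z ^ m * ((‖z‖ ^ (-((m : ℝ) * (K - 1) / K)) : ℝ) : ℂ)) :
    ∀ z : ℂ, z ≠ 0 →
      ‖fderiv ℝ f z‖ = (m : ℝ) * ‖z‖ ^ ((m : ℝ) / K - 1) ∧
      ‖fderiv ℝ f z‖ ^ 2 = K * (fderiv ℝ f z).det := by
  intro z hz
  set p := -((m : ℝ) * (K - 1) / K)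
  set r := ‖z‖ ^ ((m : ℝ) / K - 1)
  have hK : 0 < K := by linarith
  have hp : p ≤ 0 := neg_nonpos.2 (div_nonneg (mul_nonneg m.cast_nonneg (by linarith)) hK.le)
  have hexp : (m : ℝ) + p = m / K := by simp only [p]; field_simp; ring
  have hKexp : K * (m + p) = m := by rw [hexp]; field_simp
  have hcoef : 0 ≤ (m : ℝ) + p / 2 := by linarith [div_nonneg m.cast_nonneg hK.le]
  have hDf := ((hasFDerivAt_pow_mul_norm_rpow hz m p).congr_of_eventuallyEq
    ((eventually_ne_nhds hz).mono hf)).fderiv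
  have hg : ‖z ^ m * ((‖z‖ ^ p : ℝ) : ℂ)‖ / ‖z‖ = r := by
    rw [norm_pow_mul_norm_rpow hz, hexp, ← Real.rpow_sub_one (norm_ne_zero_iff.mpr hz)]
  have hA : ‖((m + p / 2 : ℝ) : ℂ) * (z ^ m * ((‖z‖ ^ p : ℝ) : ℂ)) / z‖ = (m + p / 2) * r := by
    rw [mul_div_assoc, norm_mul, norm_div, hg, Complex.norm_real, Real.norm_of_nonneg hcoef]
  have hB : ‖((p / 2 : ℝ) : ℂ) * (z ^ m * ((‖z‖ ^ p : ℝ) : ℂ)) / starRingEnd ℂ z‖ =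
      -(p / 2) * r := by
    rw [mul_div_assoc, norm_mul, norm_div, Complex.norm_conj, hg, Complex.norm_real,
      Real.norm_of_nonpos (by linarith)]
  have hnorm : ‖fderiv ℝ f z‖ = m * r := by
    rw [hDf, norm_smul_id_add_smul_conjCLE, hA, hB]
    ring
  refine ⟨hnorm, ?_⟩
  rw [hnorm, hDf, det_smul_id_add_smul_conjCLE, hA, hB]
  linear_combination (-(m : ℝ) * r ^ 2) * hKexp

/-- Example 4.1 of the paper: for `f(z) = z^m |z|^{−m(K−1)/K}` the operator norm of the
real derivative is `m|z|^{m/K−1}` at every `z ≠ 0`, and the distortion identity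
`‖Df(z)‖² = K · det Df(z)` holds, so `f` is `K`-quasiregular. -/
theorem distortion_of_sharpness_example
    (m : ℕ) (hm : 2 ≤ m) (K : ℝ) (hK1 : 1 ≤ K) (hKm : K < m)
    (f : ℂ → ℂ) (hf0 : f 0 = 0)
    (hf : ∀ z : ℂ, z ≠ 0 →
      f z = z ^ m * ((‖z‖ ^ (-((m : ℝ) * (K - 1) / K)) : ℝ) : ℂ)) :
    ∀ z : ℂ, z ≠ 0 →
      ‖fderiv ℝ f z‖ = (m : ℝ) * ‖z‖ ^ ((m : ℝ) / K - 1) ∧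
      ‖fderiv ℝ f z‖ ^ 2 = K * (fderiv ℝ f z).det :=
  distortion_of_sharpness_example_general m K hK1 f hf
end
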